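/- Let T be a syntactic equality theory and let σ, τ ∈ RSubst both be satisfiable in T, with T ⊢ ∀(σ ↔ τ). Then α_S(σ) = α_S(τ), i.e., the two substitutions have the same abstraction in the domain SFL. -/

import Mathlib

open Classical

noncomputable section

/-- Finite terms over a ranked signature `Sig` (with arity function `ar`)
and variables taken from `Vr`. -/
inductive HTerm (Sig : Type) (ar : Sig → ℕ) (Vr : Type) : Type where
  | var : Vr → HTerm Sig ar Vr
  | app : (f : Sig) → (Fin (ar f) → HTerm Sig ar Vr) → HTerm Sig ar Vr

namespace HTerm

variable {Sig : Type} {ar : Sig → ℕ} {Vr : Type}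

/-- The set of variables occurring in a term. -/
def vars : HTerm Sig ar Vr → Set Vr
  | var x => {x}
  | app _ ts => ⋃ i, (ts i).vars

/-- The number of occurrences of the variable `z` in a term. -/
def count (z : Vr) : HTerm Sig ar Vr → ℕ
  | var x => if x = z then 1 else 0
  | app _ ts => ∑ i, (ts i).count z

/-- Application of a (raw) substitution to a term. -/
def substApp (σ : Vr → HTerm Sig ar Vr) : HTerm Sig ar Vr → HTerm Sig ar Vr
  | var x => σ x
  | app f ts => app f (fun i => (ts i).substApp σ)

end HTerm

/-- A substitution: a map from variables to finite terms that is the identity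
almost everywhere. -/
structure Subst (Sig : Type) (ar : Sig → ℕ) (Vr : Type) where
  toFun : Vr → HTerm Sig ar Vr
  finite_dom : {x : Vr | toFun x ≠ HTerm.var x}.Finite

namespace Subst

variable {Sig : Type} {ar : Sig → ℕ} {Vr : Type}

/-- The domain of a substitution. -/
def dom (σ : Subst Sig ar Vr) : Set Vr := {x | σ.toFun x ≠ HTerm.var x}

/-- The number of bindings `#σ`. -/
def nb (σ : Subst Sig ar Vr) : ℕ := σ.finite_dom.toFinset.card

/-- `iterApp σ i t` is `t σ^i`, the `i`-fold application of `σ` to `t`. -/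
def iterApp (σ : Subst Sig ar Vr) (i : ℕ) (t : HTerm Sig ar Vr) : HTerm Sig ar Vr :=
  (HTerm.substApp σ.toFun)^[i] t

/-- `σ` has a circular subset `{x₁↦x₂, …, x_{n-1}↦xₙ, xₙ↦x₁}` with `n > 1`
distinct variables. -/
def HasCircularSubset (σ : Subst Sig ar Vr) : Prop :=
  ∃ n : ℕ, ∃ _h : 1 < n, ∃ x : Fin n → Vr, Function.Injective x ∧
    ∀ i : Fin n, σ.toFun (x i) = HTerm.var (x ⟨(i.1 + 1) % n, Nat.mod_lt _ (by omega)⟩)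

/-- `σ` is in rational solved form: it has no circular subset. -/
def IsRSubst (σ : Subst Sig ar Vr) : Prop := ¬ σ.HasCircularSubset

/-- The occurrence operator: `occ σ v = {y | v ∈ vars(y σ^n) \ dom σ}` where `n = #σ`. -/
def occ (σ : Subst Sig ar Vr) (v : Vr) : Set Vr :=
  {y | v ∈ (σ.iterApp σ.nb (HTerm.var y)).vars ∧ v ∉ σ.dom}

/-- The freeness operator: `fvars σ = {y | y σ^n ∈ Vars}` where `n = #σ`. -/
def fvars (σ : Subst Sig ar Vr) : Set Vr :=
  {y | ∃ z : Vr, σ.iterApp σ.nb (HTerm.var y) = HTerm.var z}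

/-- The groundness operator. -/
def gvars (σ : Subst Sig ar Vr) : Set Vr :=
  {y | y ∈ σ.dom ∧ ∀ v : Vr, y ∉ σ.occ v}

/-- The linearity operator: every non-domain variable of `y σ^n` occurs exactly
once in `y σ^{2n}`, where `n = #σ`. -/
def lvars (σ : Subst Sig ar Vr) : Set Vr :=
  {y | ∀ z ∈ (σ.iterApp σ.nb (HTerm.var y)).vars, z ∉ σ.dom →
        (σ.iterApp (2 * σ.nb) (HTerm.var y)).count z = 1}

/-- The sharing-sets operator: `ssets σ VI = {occ(σ,v) ∩ VI | v ∈ Vars} \ {∅}`. -/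
def ssets (σ : Subst Sig ar Vr) (VI : Set Vr) : Set (Set Vr) :=
  {g | (∃ v : Vr, g = σ.occ v ∩ VI) ∧ g ≠ ∅}

/-- The set of variables occurring in (the bindings of) a substitution. -/
def varsOf (σ : Subst Sig ar Vr) : Set Vr :=
  ⋃ x ∈ σ.dom, ({x} ∪ (σ.toFun x).vars)

end Subst

/-- The set `SG` of sharing groups over `VI`: nonempty subsets of `VI`. -/
def SG {Vr : Type} (VI : Set Vr) : Set (Set Vr) := {S | S ⊆ VI ∧ S ≠ ∅}

/-- An element of the abstract domain `SFL`: a set-sharing component together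
with a freeness and a linearity component. -/
structure SFLElem (Vr : Type) where
  sh : Set (Set Vr)
  f : Set Vr
  l : Set Vr

/-- Well-formedness of an `SFL` element: `sh ∈ SH = ℘(SG VI)`, `f ⊆ VI`, `l ⊆ VI`. -/
def SFLElem.WF {Vr : Type} (VI : Set Vr) (d : SFLElem Vr) : Prop :=
  d.sh ⊆ SG VI ∧ d.f ⊆ VI ∧ d.l ⊆ VI

/-- The bottom element `⊥_S = ⟨∅, VI, VI⟩` of `SFL`. -/
def botS {Vr : Type} (VI : Set Vr) : SFLElem Vr := ⟨∅, VI, VI⟩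

/-- The order of `SFL`: `⊆` on the sharing component, `⊇` on freeness and linearity. -/
def SFLElem.leS {Vr : Type} (d1 d2 : SFLElem Vr) : Prop :=
  d1.sh ⊆ d2.sh ∧ d2.f ⊆ d1.f ∧ d2.l ⊆ d1.l

/-- The least upper bound of `SFL`. -/
def SFLElem.lubS {Vr : Type} (d1 d2 : SFLElem Vr) : SFLElem Vr :=
  ⟨d1.sh ∪ d2.sh, d1.f ∩ d2.f, d1.l ∩ d2.l⟩

/-- The abstraction function `α_S` on a single substitution. -/
def alphaS {Sig : Type} {ar : Sig → ℕ} {Vr : Type} (VI : Set Vr)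
    (σ : Subst Sig ar Vr) : SFLElem Vr :=
  ⟨σ.ssets VI, σ.fvars ∩ VI, σ.lvars ∩ VI⟩

/-- The abstraction function `α_S` on a set of substitutions (the lub of the
pointwise abstractions). -/
def alphaSetS {Sig : Type} {ar : Sig → ℕ} {Vr : Type} (VI : Set Vr)
    (Ss : Set (Subst Sig ar Vr)) : SFLElem Vr :=
  ⟨⋃ σ ∈ Ss, σ.ssets VI,
   {x | x ∈ VI ∧ ∀ σ ∈ Ss, x ∈ σ.fvars},
   {x | x ∈ VI ∧ ∀ σ ∈ Ss, x ∈ σ.lvars}⟩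

/-- The concretization function `γ_S`. -/
def gammaS (Sig : Type) (ar : Sig → ℕ) {Vr : Type} (VI : Set Vr)
    (d : SFLElem Vr) : Set (Subst Sig ar Vr) :=
  {σ | σ.IsRSubst ∧ σ.ssets VI ⊆ d.sh ∧ d.f ⊆ σ.fvars ∧ d.l ⊆ σ.lvars}

/-- A first-order interpretation (model) of the signature: a carrier together
with an interpretation of each function symbol. -/
structure Interp (Sig : Type) (ar : Sig → ℕ) : Type 1 where
  carrier : Type
  interp : (f : Sig) → (Fin (ar f) → carrier) → carrier

namespace Interp

variable {Sig : Type} {ar : Sig → ℕ} {Vr : Type}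

/-- Evaluation of a term in an interpretation under a valuation of the variables. -/
def eval (M : Interp Sig ar) (ν : Vr → M.carrier) : HTerm Sig ar Vr → M.carrier
  | HTerm.var x => ν x
  | HTerm.app f ts => M.interp f (fun i => M.eval ν (ts i))

/-- `M` satisfies the identity axioms: function symbols are injective and
terms with distinct outermost function symbols are unequal. -/
def SatisfiesIdentity (M : Interp Sig ar) : Prop :=
  (∀ (f : Sig) (a b : Fin (ar f) → M.carrier), M.interp f a = M.interp f b → a = b) ∧
  (∀ (f g : Sig) (a : Fin (ar f) → M.carrier) (b : Fin (ar g) → M.carrier),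
      f ≠ g → M.interp f a ≠ M.interp g b)

/-- `M` satisfies a set of equations under a valuation. -/
def SatEqs (M : Interp Sig ar) (ν : Vr → M.carrier)
    (e : Set (HTerm Sig ar Vr × HTerm Sig ar Vr)) : Prop :=
  ∀ p ∈ e, M.eval ν p.1 = M.eval ν p.2

/-- `M` satisfies the occurs-check axioms (for variables in `Vr`). -/
def SatisfiesOC (M : Interp Sig ar) (Vr : Type) : Prop :=
  ∀ (t : HTerm Sig ar Vr) (z : Vr), (∀ y : Vr, t ≠ HTerm.var y) → z ∈ t.vars →
    ∀ ν : Vr → M.carrier, M.eval ν t ≠ ν z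

end Interp

/-- The set of equations corresponding to a substitution:
`{x = σ(x) | x ∈ dom σ}`. -/
def eqsOf {Sig : Type} {ar : Sig → ℕ} {Vr : Type} (σ : Subst Sig ar Vr) :
    Set (HTerm Sig ar Vr × HTerm Sig ar Vr) :=
  {p | ∃ x ∈ σ.dom, p = (HTerm.var x, σ.toFun x)}

/-- A theory is identified (semantically) with its class of models; a
syntactic equality theory is a consistent theory all of whose models
satisfy the (congruence and) identity axioms. -/
def IsSyntacticTheory {Sig : Type} {ar : Sig → ℕ} (T : Set (Interp Sig ar)) : Prop :=
  T.Nonempty ∧ ∀ M ∈ T, M.SatisfiesIdentity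

/-- `σ` is satisfiable in `T`: in every model of `T`, every valuation of the
non-domain variables extends to a valuation satisfying `σ`;
semantically, `T ⊢ ∀ (Vars \ dom σ) : ∃ dom σ . σ`. -/
def SatisfiableIn {Sig : Type} {ar : Sig → ℕ} {Vr : Type}
    (T : Set (Interp Sig ar)) (σ : Subst Sig ar Vr) : Prop :=
  ∀ M ∈ T, ∀ ν : Vr → M.carrier, ∃ ν' : Vr → M.carrier,
    (∀ x ∉ σ.dom, ν' x = ν x) ∧ M.SatEqs ν' (eqsOf σ)

/-- `T ⊢ ∀ (σ ↔ τ)`, semantically. -/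
def EquivIn {Sig : Type} {ar : Sig → ℕ} {Vr : Type}
    (T : Set (Interp Sig ar)) (σ τ : Subst Sig ar Vr) : Prop :=
  ∀ M ∈ T, ∀ ν : Vr → M.carrier, M.SatEqs ν (eqsOf σ) ↔ M.SatEqs ν (eqsOf τ)

/-!
Write `n = #σ`. For `σ` in rational solved form, `y σ^n` is already stable in the respects
`α_S` looks at: a non-domain variable occurring in some `y σ^K` occurs in `y σ^n`, one occurring
twice in some `y σ^K` occurs twice in `y σ^(2n)`, if `y σ^n` is a variable it is outside the
domain, and domain variables of `y σ^K` lie deep when `K` is large.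

Fix a model `M` of `T`, an atom `A` (the value of a constant) and some `B ≠ A`. Every solution
`ν` of `σ` has `eval ν (y σ^k) = ν y`, and the non-domain variables (parameters) of `σ` can be
valued freely; as `σ` and `τ` have the same solutions, `y σ^n` and `y τ^K` agree under all of
them. Take two solutions valuing every parameter of `τ` by `A`, except that the second gives
`B` to the parameter `w`. By the identity axioms, `y σ^n` and `y τ^K` can be followed down
together along an occurrence in `y σ^n` of a variable valued `A` by the first solution and not
by the second, until `y τ^K` meets a variable separating the two solutions; for `K` large this
is a parameter, hence `w`. This transfers sharing groups and linearity from `σ` to `τ`, and a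
single well-chosen solution transfers freeness; by symmetry `α_S(σ) = α_S(τ)`.
-/

namespace HTerm

variable {Sig : Type} {ar : Sig → ℕ} {Vr : Type}

inductive OccAt : HTerm Sig ar Vr → List ℕ → Vr → Prop
  | var (z : Vr) : OccAt (var z) [] z
  | app {f : Sig} {ts : Fin (ar f) → HTerm Sig ar Vr} (i : ℕ) (hi : i < ar f) {p : List ℕ}
      {z : Vr} : OccAt (ts ⟨i, hi⟩) p z → OccAt (app f ts) (i :: p) z

theorem occAt_var_iff {x z : Vr} {p : List ℕ} :
    OccAt (var x : HTerm Sig ar Vr) p z ↔ p = [] ∧ z = x := by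
  constructor
  · rintro ⟨⟩; exact ⟨rfl, rfl⟩
  · rintro ⟨rfl, rfl⟩; exact OccAt.var z

theorem occAt_nil_iff {t : HTerm Sig ar Vr} {z : Vr} : OccAt t [] z ↔ t = var z := by
  constructor
  · rintro ⟨⟩; rfl
  · rintro rfl; exact OccAt.var z

theorem OccAt.mem_vars {t : HTerm Sig ar Vr} {p : List ℕ} {z : Vr} (h : OccAt t p z) :
    z ∈ t.vars := by
  induction h with
  | var z => exact rfl
  | app i hi _ ih => exact Set.mem_iUnion.2 ⟨⟨i, hi⟩, ih⟩

theorem exists_occAt_of_mem_vars {t : HTerm Sig ar Vr} {z : Vr} (h : z ∈ t.vars) :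
    ∃ p, OccAt t p z := by
  induction t with
  | var x => exact ⟨[], by rw [h]; exact OccAt.var x⟩
  | app f ts ih =>
    obtain ⟨i, hi⟩ := Set.mem_iUnion.1 h
    obtain ⟨p, hp⟩ := ih i hi
    exact ⟨i.1 :: p, OccAt.app i.1 i.2 hp⟩

theorem OccAt.unique {t : HTerm Sig ar Vr} {p : List ℕ} {z z' : Vr} (h : OccAt t p z)
    (h' : OccAt t p z') : z = z' := by
  induction h with
  | var z => cases h'; rfl
  | app i hi _ ih => cases h' with | app _ _ h' => exact ih h'

theorem OccAt.append_ne {t : HTerm Sig ar Vr} {p q : List ℕ} {z w : Vr} (hp : OccAt t p z)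
    (hq : OccAt t q w) (hne : p ≠ q) (a b : List ℕ) : p ++ a ≠ q ++ b := by
  induction hp generalizing q with
  | var z => cases hq; exact absurd rfl hne
  | app i hi _ ih =>
    cases hq with
    | app j hj hq =>
      intro h
      simp only [List.cons_append, List.cons.injEq] at h
      obtain ⟨rfl, h⟩ := h
      exact ih hq (fun h => hne (by rw [h])) h

def positions (z : Vr) : HTerm Sig ar Vr → Finset (List ℕ)
  | var x => if x = z then {[]} else ∅
  | app _ ts => Finset.univ.biUnion fun i =>
      (positions z (ts i)).map ⟨_, List.cons_injective (a := i.1)⟩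

theorem mem_positions {t : HTerm Sig ar Vr} {z : Vr} {p : List ℕ} :
    p ∈ t.positions z ↔ OccAt t p z := by
  induction t generalizing p with
  | var x =>
    rw [occAt_var_iff, positions]
    split_ifs with h
    · simp [h]
    · simp [Ne.symm h]
  | app f ts ih =>
    simp only [positions, Finset.mem_biUnion, Finset.mem_univ, true_and, Finset.mem_map,
      Function.Embedding.coeFn_mk, ih]
    constructor
    · rintro ⟨i, p, hp, rfl⟩
      exact OccAt.app i.1 i.2 hp
    · rintro ⟨⟩
      exact ⟨_, _, by assumption, rfl⟩

theorem card_positions (t : HTerm Sig ar Vr) (z : Vr) : (t.positions z).card = t.count z := by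
  induction t with
  | var x => by_cases h : x = z <;> simp [positions, count, h]
  | app f ts ih =>
    rw [positions, Finset.card_biUnion, count]
    · simp only [Finset.card_map, ih]
    · intro i _ j _ hij
      simp only [Function.onFun, Finset.disjoint_left, Finset.mem_map,
        Function.Embedding.coeFn_mk]
      rintro _ ⟨p, -, rfl⟩ ⟨q, -, h⟩
      exact hij (Fin.ext (List.cons_eq_cons.1 h).1.symm)

theorem count_pos_iff {t : HTerm Sig ar Vr} {z : Vr} : 0 < t.count z ↔ z ∈ t.vars := by
  rw [← card_positions, Finset.card_pos]
  exact ⟨fun ⟨p, hp⟩ => (mem_positions.1 hp).mem_vars,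
    fun h => (exists_occAt_of_mem_vars h).imp fun _ => mem_positions.2⟩

theorem one_lt_count_iff {t : HTerm Sig ar Vr} {z : Vr} :
    1 < t.count z ↔ ∃ p q, p ≠ q ∧ OccAt t p z ∧ OccAt t q z := by
  simp only [← card_positions, Finset.one_lt_card_iff, mem_positions]
  grind

theorem substApp_var (t : HTerm Sig ar Vr) : t.substApp var = t := by
  induction t with
  | var x => rfl
  | app f ts ih => simp only [substApp, ih]

theorem substApp_substApp (s s' : Vr → HTerm Sig ar Vr) (t : HTerm Sig ar Vr) :
    (t.substApp s).substApp s' = t.substApp fun x => (s x).substApp s' := by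
  induction t with
  | var x => rfl
  | app f ts ih => simp only [substApp, ih]

theorem occAt_substApp_iff {s : Vr → HTerm Sig ar Vr} {t : HTerm Sig ar Vr} {P : List ℕ}
    {z : Vr} : OccAt (t.substApp s) P z ↔ ∃ q w r, P = q ++ r ∧ OccAt t q w ∧ OccAt (s w) r z := by
  induction t generalizing P with
  | var x =>
    simp only [substApp, occAt_var_iff]
    constructor
    · intro h; exact ⟨[], x, P, rfl, ⟨rfl, rfl⟩, h⟩
    · rintro ⟨q, w, r, rfl, ⟨rfl, rfl⟩, h⟩; exact h
  | app f ts ih =>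
    constructor
    · rintro ⟨⟩
      obtain ⟨q, w, r, rfl, hq, hr⟩ := (ih _).1 (by assumption)
      exact ⟨_ :: q, w, r, rfl, OccAt.app _ _ hq, hr⟩
    · rintro ⟨q, w, r, rfl, ⟨⟩, hr⟩
      exact OccAt.app _ _ ((ih _).2 ⟨_, w, r, rfl, by assumption, hr⟩)

end HTerm

namespace Subst

open HTerm Function

variable {Sig : Type} {ar : Sig → ℕ} {Vr : Type} {σ : Subst Sig ar Vr}

theorem toFun_of_notMem_dom {y : Vr} (h : y ∉ σ.dom) : σ.toFun y = var y := not_not.1 h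

theorem iterApp_succ (k : ℕ) (t : HTerm Sig ar Vr) :
    σ.iterApp (k + 1) t = (σ.iterApp k t).substApp σ.toFun :=
  iterate_succ_apply' _ _ _

theorem iterApp_add (a b : ℕ) (t : HTerm Sig ar Vr) :
    σ.iterApp (a + b) t = σ.iterApp b (σ.iterApp a t) := by
  rw [iterApp, add_comm, iterate_add_apply]; rfl

theorem iterApp_eq_substApp (k : ℕ) (t : HTerm Sig ar Vr) :
    σ.iterApp k t = t.substApp fun x => σ.iterApp k (var x) := by
  induction k with
  | zero => exact (substApp_var t).symm
  | succ k ih => simp only [iterApp_succ, ih, substApp_substApp]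

theorem iterApp_var_of_notMem_dom {y : Vr} (h : y ∉ σ.dom) (k : ℕ) :
    σ.iterApp k (var y) = var y := by
  induction k with
  | zero => rfl
  | succ k ih => rw [iterApp_succ, ih, substApp, toFun_of_notMem_dom h]

theorem mem_fvars_of_notMem_dom {u : Vr} (h : u ∉ σ.dom) : u ∈ σ.fvars :=
  ⟨u, iterApp_var_of_notMem_dom h _⟩

theorem occAt_iterApp_add_iff {a b : ℕ} {t : HTerm Sig ar Vr} {P : List ℕ} {z : Vr} :
    OccAt (σ.iterApp (a + b) t) P z ↔
      ∃ q w r, P = q ++ r ∧ OccAt (σ.iterApp a t) q w ∧ OccAt (σ.iterApp b (var w)) r z := by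
  rw [iterApp_add, iterApp_eq_substApp b, occAt_substApp_iff]

theorem occAt_iterApp_of_le {k l : ℕ} {t : HTerm Sig ar Vr} {P : List ℕ} {z : Vr}
    (hz : z ∉ σ.dom) (h : OccAt (σ.iterApp k t) P z) (hkl : k ≤ l) :
    OccAt (σ.iterApp l t) P z := by
  obtain ⟨j, rfl⟩ := Nat.exists_eq_add_of_le hkl
  refine occAt_iterApp_add_iff.2 ⟨P, z, [], P.append_nil.symm, h, ?_⟩
  rw [iterApp_var_of_notMem_dom hz]
  exact OccAt.var z

theorem exists_lt_eq_of_forall_mem_dom (w : Fin (σ.nb + 1) → Vr) (hw : ∀ i, w i ∈ σ.dom) :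
    ∃ a b, a < b ∧ w a = w b := by
  have hcard : σ.finite_dom.toFinset.card < (Finset.univ : Finset (Fin (σ.nb + 1))).card := by
    rw [Finset.card_univ, Fintype.card_fin]; exact Nat.lt_succ_self _
  obtain ⟨a, -, b, -, hne, hab⟩ := Finset.exists_ne_map_eq_of_card_lt_of_maps_to hcard
    (f := w) fun i _ => σ.finite_dom.mem_toFinset.2 (hw i)
  rcases hne.lt_or_gt with h | h
  exacts [⟨a, b, h, hab⟩, ⟨b, a, h, hab.symm⟩]

/-- Among the first `#σ + 1` intermediate variables either one is outside the domain, and the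
chain stops there, or two coincide, and the loop between them can be cut out. -/
theorem exists_occAt_iterApp_le_nb {k : ℕ} {t : HTerm Sig ar Vr} {P : List ℕ} {z : Vr}
    (h : OccAt (σ.iterApp k t) P z) :
    ∃ k' ≤ σ.nb, (z ∈ σ.dom → k' < σ.nb) ∧ ∃ P', OccAt (σ.iterApp k' t) P' z := by
  induction k using Nat.strong_induction_on generalizing P with
  | _ k ih =>
  by_cases hk : k < σ.nb ∨ (k = σ.nb ∧ z ∉ σ.dom)
  · exact ⟨k, by omega, fun hz => by tauto, P, h⟩
  have hsplit (i : Fin (σ.nb + 1)) : ∃ q w r, P = q ++ r ∧ OccAt (σ.iterApp i t) q w ∧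
      OccAt (σ.iterApp (k - i) (var w)) r z := by
    have := i.2
    exact occAt_iterApp_add_iff.1 (by rwa [Nat.add_sub_cancel' (by omega)])
  choose q w r _ hq hr using hsplit
  by_cases hw : ∀ i, w i ∈ σ.dom
  · obtain ⟨a, b, hab, hwab⟩ := exists_lt_eq_of_forall_mem_dom w hw
    have hb := b.2
    have hglue : OccAt (σ.iterApp (a + (k - b)) t) (q a ++ r b) z :=
      occAt_iterApp_add_iff.2 ⟨q a, w a, r b, rfl, hq a, hwab ▸ hr b⟩
    exact ih _ (by omega) hglue
  · obtain ⟨i, hi⟩ := not_forall.1 hw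
    have hri := hr i
    rw [iterApp_var_of_notMem_dom hi, occAt_var_iff] at hri
    obtain ⟨-, rfl⟩ := hri
    exact ⟨i, by omega, fun hz => absurd hz hi, q i, hq i⟩

theorem exists_occAt_iterApp_nb {k : ℕ} {t : HTerm Sig ar Vr} {P : List ℕ} {z : Vr}
    (hz : z ∉ σ.dom) (h : OccAt (σ.iterApp k t) P z) : ∃ P', OccAt (σ.iterApp σ.nb t) P' z :=
  let ⟨_, hk, _, P', hP'⟩ := exists_occAt_iterApp_le_nb h
  ⟨P', occAt_iterApp_of_le hz hP' hk⟩

theorem mem_vars_iterApp_nb {k : ℕ} {t : HTerm Sig ar Vr} {z : Vr} (hz : z ∉ σ.dom)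
    (h : z ∈ (σ.iterApp k t).vars) : z ∈ (σ.iterApp σ.nb t).vars :=
  let ⟨_, hP⟩ := exists_occAt_of_mem_vars h
  let ⟨_, hP'⟩ := exists_occAt_iterApp_nb hz hP
  hP'.mem_vars

def varStep (σ : Subst Sig ar Vr) (u : Vr) : Vr :=
  match σ.toFun u with
  | var w => w
  | app _ _ => u

theorem iterApp_eq_var_iterate {k : ℕ} {y z : Vr} (h : σ.iterApp k (var y) = var z) :
    ∀ i ≤ k, σ.iterApp i (var y) = var (σ.varStep^[i] y) := by
  induction k generalizing z with
  | zero => intro i hi; rw [Nat.le_zero.1 hi]; rfl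
  | succ k ih =>
    rw [iterApp_succ] at h
    cases hk : σ.iterApp k (var y) with
    | app => rw [hk] at h; cases h
    | var w =>
      have ih := ih hk
      intro i hi
      rcases Nat.lt_or_eq_of_le hi with hi | rfl
      · exact ih i (by omega)
      rw [iterApp_succ, hk, iterate_succ_apply', ← var.inj (hk.symm.trans (ih k le_rfl))]
      rw [hk, substApp] at h
      simp only [substApp, varStep, h]

theorem hasCircularSubset_of_isPeriodicPt {x : Vr} {m : ℕ} (hm : 0 < m)
    (hx : IsPeriodicPt σ.varStep m x) (hdom : x ∈ σ.dom)
    (hbind : ∀ i < m, σ.toFun (σ.varStep^[i] x) = var (σ.varStep^[i + 1] x)) :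
    σ.HasCircularSubset := by
  have hcm : minimalPeriod σ.varStep x ≤ m := hx.minimalPeriod_le hm
  have hc1 : 1 < minimalPeriod σ.varStep x := by
    by_contra hc1
    have hfix : IsFixedPt σ.varStep x :=
      minimalPeriod_eq_one_iff_isFixedPt.1 (by have := hx.minimalPeriod_pos hm; omega)
    exact hdom (by simpa [hfix.eq] using hbind 0 hm)
  refine ⟨_, hc1, fun i => σ.varStep^[i] x, fun i j hij => Fin.ext ?_, fun i => ?_⟩
  · exact iterate_injOn_Iio_minimalPeriod i.2 j.2 hij
  · simp only [iterate_mod_minimalPeriod_eq]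
    exact hbind i (by omega)

/-- If `k ≥ #σ`, the variables `y, yσ, yσ², …` are all in the domain and repeat among the first
`#σ + 1` of them, closing a circular subset. -/
theorem lt_nb_of_iterApp_eq_var (hσ : σ.IsRSubst) {k : ℕ} {y z : Vr}
    (h : σ.iterApp k (var y) = var z) (hz : z ∈ σ.dom) : k < σ.nb := by
  by_contra hk
  have hx := iterApp_eq_var_iterate h
  set x : ℕ → Vr := fun i => σ.varStep^[i] y
  have hdom (i : ℕ) (hi : i ≤ k) : x i ∈ σ.dom := by
    by_contra hxi
    rw [← Nat.add_sub_cancel' hi, iterApp_add, hx i hi, iterApp_var_of_notMem_dom hxi] at h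
    exact hxi (var.inj h ▸ hz)
  have hbind (i : ℕ) (hi : i < k) : σ.toFun (x i) = var (x (i + 1)) := by
    rw [← hx (i + 1) hi, iterApp_succ, hx i hi.le]; rfl
  obtain ⟨a, b, hab, hxab⟩ := exists_lt_eq_of_forall_mem_dom (fun i => x i)
    fun i => hdom i (by omega)
  have hb := b.2
  apply hσ
  refine hasCircularSubset_of_isPeriodicPt (m := b - a) (by omega) ?_ (hdom a (by omega))
    fun i hi => ?_
  · change σ.varStep^[b - a] (σ.varStep^[a] y) = σ.varStep^[a] y
    rw [← iterate_add_apply, Nat.sub_add_cancel hab.le]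
    exact hxab.symm
  · change σ.toFun (σ.varStep^[i] (σ.varStep^[a] y)) = var (σ.varStep^[i + 1] (σ.varStep^[a] y))
    rw [← iterate_add_apply, ← iterate_add_apply, Nat.add_right_comm]
    exact hbind (i + a) (by omega)

theorem notMem_dom_of_iterApp_nb_eq_var (hσ : σ.IsRSubst) {y z : Vr}
    (h : σ.iterApp σ.nb (var y) = var z) : z ∉ σ.dom :=
  fun hz => (lt_nb_of_iterApp_eq_var hσ h hz).false

/-- Every block of `#σ + 1` steps ending in the domain descends at least one level. -/
theorem notMem_dom_of_occAt_iterApp (hσ : σ.IsRSubst) {K : ℕ} {y u : Vr} {P : List ℕ}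
    (h : OccAt (σ.iterApp K (var y)) P u) (hK : (P.length + 1) * (σ.nb + 1) ≤ K) :
    u ∉ σ.dom := by
  intro hu
  induction K using Nat.strong_induction_on generalizing y P with
  | _ K ih =>
  obtain ⟨K', rfl⟩ := Nat.exists_eq_add_of_le (le_trans (Nat.le_mul_of_pos_left _ (by omega)) hK)
  obtain ⟨p, w, p', rfl, hp, hp'⟩ := occAt_iterApp_add_iff.1 h
  have hw : w ∈ σ.dom := by
    by_contra hw
    rw [iterApp_var_of_notMem_dom hw, occAt_var_iff] at hp'
    exact hw (hp'.2 ▸ hu)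
  have hpne : p ≠ [] := by
    rintro rfl
    exact absurd (lt_nb_of_iterApp_eq_var hσ (occAt_nil_iff.1 hp) hw) (by omega)
  have hlen : p'.length + 1 ≤ (p ++ p').length := by
    rw [List.length_append]; have := List.length_pos_iff.2 hpne; omega
  exact ih K' (by omega) hp' (by nlinarith)

/-- `c` is where the two occurrences branch apart; both branches are then shortened to `#σ`
steps. -/
theorem exists_mem_dom_one_lt_count {K : ℕ} {y z : Vr} (hz : z ∉ σ.dom)
    (h : 1 < (σ.iterApp K (var y)).count z) :
    ∃ k c p, OccAt (σ.iterApp k (var y)) p c ∧ c ∈ σ.dom ∧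
      1 < (σ.iterApp (σ.nb + 1) (var c)).count z := by
  rw [one_lt_count_iff] at h
  induction K generalizing y with
  | zero =>
    obtain ⟨P, Q, hne, hP, hQ⟩ := h
    exact absurd ((occAt_var_iff.1 hP).1.trans (occAt_var_iff.1 hQ).1.symm) hne
  | succ K ih =>
    obtain ⟨P, Q, hne, hP, hQ⟩ := h
    rw [add_comm] at hP hQ
    obtain ⟨r₁, w₁, p₁, rfl, hr₁, hp₁⟩ := occAt_iterApp_add_iff.1 hP
    obtain ⟨r₂, w₂, p₂, rfl, hr₂, hp₂⟩ := occAt_iterApp_add_iff.1 hQ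
    by_cases hr : r₁ = r₂
    · subst hr
      obtain rfl := hr₁.unique hr₂
      obtain ⟨k, c, p, hp, hc, hcount⟩ :=
        ih ⟨p₁, p₂, fun h => hne (by rw [h]), hp₁, hp₂⟩
      exact ⟨1 + k, c, r₁ ++ p, occAt_iterApp_add_iff.2 ⟨r₁, w₁, p, rfl, hr₁, hp⟩, hc, hcount⟩
    have hy : y ∈ σ.dom := by
      by_contra hy
      rw [iterApp_var_of_notMem_dom hy, occAt_var_iff] at hr₁ hr₂
      exact hr (hr₁.1.trans hr₂.1.symm)
    obtain ⟨P₁, hP₁⟩ := exists_occAt_iterApp_nb hz hp₁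
    obtain ⟨P₂, hP₂⟩ := exists_occAt_iterApp_nb hz hp₂
    refine ⟨0, y, [], OccAt.var y, hy, one_lt_count_iff.2 ⟨r₁ ++ P₁, r₂ ++ P₂,
      hr₁.append_ne hr₂ hr P₁ P₂, ?_, ?_⟩⟩ <;> rw [add_comm] <;>
      exact occAt_iterApp_add_iff.2 ⟨_, _, _, rfl, by assumption, by assumption⟩

theorem one_lt_count_iterApp_two_mul_nb {K : ℕ} {y z : Vr} (hz : z ∉ σ.dom)
    (h : 1 < (σ.iterApp K (var y)).count z) :
    1 < (σ.iterApp (2 * σ.nb) (var y)).count z := by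
  obtain ⟨k, c, p, hp, hc, hcount⟩ := exists_mem_dom_one_lt_count hz h
  obtain ⟨k', -, hk', p', hp'⟩ := exists_occAt_iterApp_le_nb hp
  obtain ⟨P, Q, hne, hP, hQ⟩ := one_lt_count_iff.1 hcount
  have hglue {R : List ℕ} (hR : OccAt (σ.iterApp (σ.nb + 1) (var c)) R z) :
      OccAt (σ.iterApp (2 * σ.nb) (var y)) (p' ++ R) z :=
    occAt_iterApp_of_le hz (occAt_iterApp_add_iff.2 ⟨p', c, R, rfl, hp', hR⟩)
      (by have := hk' hc; omega)
  exact one_lt_count_iff.2 ⟨_, _, fun h => hne (List.append_cancel_left h), hglue hP, hglue hQ⟩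

end Subst

namespace Interp

open HTerm

variable {Sig : Type} {ar : Sig → ℕ} {Vr : Type} {M : Interp Sig ar}

def IsAtom (M : Interp Sig ar) (x : M.carrier) : Prop :=
  ∀ (f : Sig) (e : Fin (ar f) → M.carrier), M.interp f e = x → ar f = 0

theorem SatisfiesIdentity.isAtom_interp (hM : M.SatisfiesIdentity) {a : Sig} (ha : ar a = 0)
    (e : Fin (ar a) → M.carrier) : M.IsAtom (M.interp a e) := by
  intro f e' h
  by_contra hf
  exact hM.2 f a e' e (fun hfa => hf (hfa ▸ ha)) h

theorem SatisfiesIdentity.nontrivial (hM : M.SatisfiesIdentity) {a b : Sig} (hab : a ≠ b)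
    (e : Fin (ar a) → M.carrier) : Nontrivial M.carrier :=
  ⟨⟨M.interp a e, M.interp b fun _ => M.interp a e, hM.2 a b _ _ hab⟩⟩

theorem interp_eq_of_ar_eq_zero {f : Sig} (hf : ar f = 0) (e e' : Fin (ar f) → M.carrier) :
    M.interp f e = M.interp f e' :=
  congrArg _ (funext fun i => absurd i.2 (by omega))

theorem IsAtom.exists_forall_interp_ne [Nontrivial M.carrier] {A : M.carrier} (hA : M.IsAtom A)
    (f : Sig) : ∃ D, ∀ e, M.interp f e ≠ D := by
  by_cases h : ∃ e, M.interp f e = A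
  · obtain ⟨e, he⟩ := h
    obtain ⟨D, hD⟩ := exists_ne A
    exact ⟨D, fun e' he' => hD (by rw [← he', ← he, interp_eq_of_ar_eq_zero (hA f e he)])⟩
  · exact ⟨A, fun e he => h ⟨e, he⟩⟩

theorem eval_substApp {ν : Vr → M.carrier} {σ : Subst Sig ar Vr} (hν : M.SatEqs ν (eqsOf σ))
    (t : HTerm Sig ar Vr) : M.eval ν (t.substApp σ.toFun) = M.eval ν t := by
  induction t with
  | var x =>
    by_cases hx : x ∈ σ.dom
    · exact (hν _ ⟨x, hx, rfl⟩).symm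
    · rw [substApp, Subst.toFun_of_notMem_dom hx]
  | app f ts ih => simp only [substApp, eval, ih]

theorem eval_iterApp {ν : Vr → M.carrier} {σ : Subst Sig ar Vr} (hν : M.SatEqs ν (eqsOf σ))
    (k : ℕ) (t : HTerm Sig ar Vr) : M.eval ν (σ.iterApp k t) = M.eval ν t := by
  induction k with
  | zero => rfl
  | succ k ih => rw [Subst.iterApp_succ, eval_substApp hν, ih]

theorem apply_eq_of_iterApp_eq_var {σ : Subst Sig ar Vr} {ν : Vr → M.carrier}
    (hν : M.SatEqs ν (eqsOf σ)) {k : ℕ} {u z : Vr}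
    (h : σ.iterApp k (var u) = var z) : ν u = ν z := by
  simpa [h, eval] using (eval_iterApp hν k (var u)).symm

theorem SatisfiesIdentity.eq_of_eval_eq (hM : M.SatisfiesIdentity) {ν ν' : Vr → M.carrier}
    {t : HTerm Sig ar Vr} (h : M.eval ν t = M.eval ν' t) {z : Vr} (hz : z ∈ t.vars) :
    ν z = ν' z := by
  induction t with
  | var x => exact hz ▸ h
  | app f ts ih =>
    obtain ⟨i, hi⟩ := Set.mem_iUnion.1 hz
    exact ih i (congrFun (hM.1 f _ _ h) i) hi

/-- Walking down `t` and `s` along the position of `v` (they agree under both valuations), `s`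
must stop at a variable `ζ` on the way, for if it reached the end its value under `ν` would be
the atom `ν v`, hence a constant, and so the same under `ν'`. -/
theorem SatisfiesIdentity.exists_occAt_ne_of_eval_eq (hM : M.SatisfiesIdentity)
    {ν ν' : Vr → M.carrier} {t : HTerm Sig ar Vr} {p : List ℕ} {v : Vr} (hv : OccAt t p v)
    (hA : M.IsAtom (ν v)) (hne : ν v ≠ ν' v) {s : HTerm Sig ar Vr}
    (h : M.eval ν t = M.eval ν s) (h' : M.eval ν' t = M.eval ν' s) :
    ∃ q r ζ, p = q ++ r ∧ OccAt s q ζ ∧ ν ζ ≠ ν' ζ ∧ (M.IsAtom (ν ζ) → r = []) := by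
  induction hv generalizing s with
  | var v =>
    cases s with
    | var ζ => exact ⟨[], [], ζ, rfl, OccAt.var ζ, fun hζ => hne (h.trans (hζ.trans h'.symm)),
        fun _ => rfl⟩
    | app g ss =>
      refine absurd ?_ hne
      change ν v = M.interp g _ at h
      change ν' v = M.interp g _ at h'
      rw [h, h', interp_eq_of_ar_eq_zero (hA g _ h.symm)]
  | @app f ts i hi p v hocc ih =>
    cases s with
    | var ζ =>
      refine ⟨[], i :: p, ζ, rfl, OccAt.var ζ, fun hζ => ?_, fun hζ => ?_⟩
      · exact hne (hM.eq_of_eval_eq (h.trans (hζ.trans h'.symm)) (OccAt.app i hi hocc).mem_vars)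
      · exact absurd (hζ f _ (show M.interp f _ = ν ζ from h)) (by omega)
    | app g ss =>
      obtain rfl : f = g := by
        by_contra hfg
        exact hM.2 f g _ _ hfg h
      obtain ⟨q, r, ζ, rfl, hq, hζ, hr⟩ :=
        ih hA hne (congrFun (hM.1 f _ _ h) ⟨i, hi⟩) (congrFun (hM.1 f _ _ h') ⟨i, hi⟩)
      exact ⟨i :: q, r, ζ, rfl, OccAt.app i hi hq, hζ, hr⟩

end Interp

section Transfer

open HTerm Subst Interp
open Function (update update_self update_of_ne)

variable {Sig : Type} {ar : Sig → ℕ} {Vr : Type} {M : Interp Sig ar} {σ τ : Subst Sig ar Vr}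

theorem SatisfiableIn.mono {T T' : Set (Interp Sig ar)} (hT : T' ⊆ T)
    (h : SatisfiableIn T σ) : SatisfiableIn T' σ :=
  fun M hM => h M (hT hM)

theorem EquivIn.mono {T T' : Set (Interp Sig ar)} (hT : T' ⊆ T) (h : EquivIn T σ τ) :
    EquivIn T' σ τ :=
  fun M hM => h M (hT hM)

theorem EquivIn.symm {T : Set (Interp Sig ar)} (h : EquivIn T σ τ) : EquivIn T τ σ :=
  fun M hM ν => (h M hM ν).symm

theorem eq_of_forall_satEqs [Nontrivial M.carrier] (hsat : SatisfiableIn {M} σ) {v v' : Vr}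
    (hv : v ∉ σ.dom) (hv' : v' ∉ σ.dom) (h : ∀ ν, M.SatEqs ν (eqsOf σ) → ν v = ν v') :
    v = v' := by
  by_contra hne
  obtain ⟨a, b, hab⟩ := exists_pair_ne M.carrier
  obtain ⟨ν, hνfree, hν⟩ := hsat M rfl (update (fun _ => b) v a)
  apply hab
  rw [← update_self v a (fun _ => b), ← hνfree v hv, h ν hν, hνfree v' hv',
    update_of_ne (Ne.symm hne)]

/-- If `y σ^n` is a variable but `y τ^n = g(…)`, give every parameter of `σ` a value outside
the range of `g`. -/
theorem fvars_subset [Nontrivial M.carrier] {A : M.carrier} (hA : M.IsAtom A)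
    (hσ : σ.IsRSubst) (hsat : SatisfiableIn {M} σ) (hequiv : EquivIn {M} σ τ) :
    σ.fvars ⊆ τ.fvars := by
  rintro y ⟨z, hz⟩
  by_contra hy
  obtain ⟨g, ss, hg⟩ : ∃ g ss, τ.iterApp τ.nb (var y) = app g ss := by
    cases h : τ.iterApp τ.nb (var y) with
    | var w => exact absurd ⟨w, h⟩ hy
    | app g ss => exact ⟨g, ss, rfl⟩
  obtain ⟨D, hD⟩ := hA.exists_forall_interp_ne g
  obtain ⟨ν, hνfree, hν⟩ := hsat M rfl fun _ => D
  apply hD fun i => M.eval ν (ss i)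
  rw [← hνfree z (notMem_dom_of_iterApp_nb_eq_var hσ hz), ← apply_eq_of_iterApp_eq_var hν hz]
  simpa [hg, eval] using eval_iterApp ((hequiv M rfl ν).1 hν) τ.nb (var y)

/-- Give the parameter `w` of `τ` a value `B` and all others the atom `A`, and compare with
giving all of them `A`: a variable of `y τ^K` high enough to be a parameter, and separating
the two valuations along the position of `v`, can only be `w`. -/
theorem mem_vars_iterApp_nb_of_iterApp_nb_eq_var (hM : M.SatisfiesIdentity)
    [Nontrivial M.carrier] {A : M.carrier} (hA : M.IsAtom A) (hτ : τ.IsRSubst)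
    (hsat : SatisfiableIn {M} τ) (hequiv : EquivIn {M} σ τ) {v w y : Vr}
    (hw : τ.iterApp τ.nb (var v) = var w) (hv : v ∈ (σ.iterApp σ.nb (var y)).vars) :
    w ∈ (τ.iterApp τ.nb (var y)).vars := by
  obtain ⟨p, hp⟩ := exists_occAt_of_mem_vars hv
  have hwτ := notMem_dom_of_iterApp_nb_eq_var hτ hw
  obtain ⟨B, hAB⟩ := exists_ne A
  obtain ⟨ν, hνfree, hν⟩ := hsat M rfl fun _ => A
  obtain ⟨ν', hν'free, hν'⟩ := hsat M rfl (update (fun _ => A) w B)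
  have heval (μ : Vr → M.carrier) (hμ : M.SatEqs μ (eqsOf τ)) :
      M.eval μ (σ.iterApp σ.nb (var y)) =
        M.eval μ (τ.iterApp ((p.length + 1) * (τ.nb + 1)) (var y)) := by
    rw [eval_iterApp ((hequiv M rfl μ).2 hμ), eval_iterApp hμ]
  have hνv : ν v = A := by rw [apply_eq_of_iterApp_eq_var hν hw, hνfree w hwτ]
  have hν'v : ν' v = B := by rw [apply_eq_of_iterApp_eq_var hν' hw, hν'free w hwτ, update_self]
  obtain ⟨q, r, ζ, rfl, hq, hζ, -⟩ := hM.exists_occAt_ne_of_eval_eq hp (hνv ▸ hA)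
    (by rw [hνv, hν'v]; exact hAB.symm) (heval ν hν) (heval ν' hν')
  have hζτ : ζ ∉ τ.dom :=
    notMem_dom_of_occAt_iterApp hτ hq (Nat.mul_le_mul_right _ (by simp))
  obtain rfl : ζ = w := by
    by_contra hζw
    exact hζ (by rw [hνfree ζ hζτ, hν'free ζ hζτ, update_of_ne hζw])
  exact mem_vars_iterApp_nb hζτ hq.mem_vars

theorem iterApp_nb_eq_var_swap [Nontrivial M.carrier] {A : M.carrier} (hA : M.IsAtom A)
    (hσ : σ.IsRSubst) (hτ : τ.IsRSubst) (hsatσ : SatisfiableIn {M} σ)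
    (hsatτ : SatisfiableIn {M} τ) (hequiv : EquivIn {M} σ τ) {v w : Vr} (hv : v ∉ σ.dom)
    (hw : τ.iterApp τ.nb (var v) = var w) : σ.iterApp σ.nb (var w) = var v := by
  obtain ⟨v', hv'⟩ := fvars_subset hA hτ hsatτ hequiv.symm
    (mem_fvars_of_notMem_dom (notMem_dom_of_iterApp_nb_eq_var hτ hw))
  rw [hv', eq_of_forall_satEqs hsatσ (notMem_dom_of_iterApp_nb_eq_var hσ hv') hv fun ν hν => ?_]
  rw [← apply_eq_of_iterApp_eq_var hν hv', apply_eq_of_iterApp_eq_var ((hequiv M rfl ν).1 hν) hw]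

theorem occ_eq_occ (hM : M.SatisfiesIdentity) [Nontrivial M.carrier] {A : M.carrier}
    (hA : M.IsAtom A) (hσ : σ.IsRSubst) (hτ : τ.IsRSubst) (hsatσ : SatisfiableIn {M} σ)
    (hsatτ : SatisfiableIn {M} τ) (hequiv : EquivIn {M} σ τ) {v w : Vr} (hv : v ∉ σ.dom)
    (hw : τ.iterApp τ.nb (var v) = var w) : σ.occ v = τ.occ w := by
  ext y
  constructor
  · rintro ⟨h, -⟩
    exact ⟨mem_vars_iterApp_nb_of_iterApp_nb_eq_var hM hA hτ hsatτ hequiv hw h,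
      notMem_dom_of_iterApp_nb_eq_var hτ hw⟩
  · rintro ⟨h, -⟩
    exact ⟨mem_vars_iterApp_nb_of_iterApp_nb_eq_var hM hA hσ hsatσ hequiv.symm
      (iterApp_nb_eq_var_swap hA hσ hτ hsatσ hsatτ hequiv hv hw) h, hv⟩

theorem ssets_subset (hM : M.SatisfiesIdentity) [Nontrivial M.carrier] {A : M.carrier}
    (hA : M.IsAtom A) (hσ : σ.IsRSubst) (hτ : τ.IsRSubst) (hsatσ : SatisfiableIn {M} σ)
    (hsatτ : SatisfiableIn {M} τ) (hequiv : EquivIn {M} σ τ) (VI : Set Vr) :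
    σ.ssets VI ⊆ τ.ssets VI := by
  rintro g ⟨⟨v, rfl⟩, hne⟩
  have hv : v ∉ σ.dom := fun hv => hne (by simp [Subst.occ, hv])
  obtain ⟨w, hw⟩ := fvars_subset hA hσ hsatσ hequiv (mem_fvars_of_notMem_dom hv)
  exact ⟨⟨w, by rw [occ_eq_occ hM hA hσ hτ hsatσ hsatτ hequiv hv hw]⟩, hne⟩

/-- The valuations are those used for sharing, with `B` given to `z`; the variable `ξ` found
sits exactly at the position of `z` because its value `A` is an atom. -/
theorem exists_occAt_iterApp_of_occAt_iterApp (hM : M.SatisfiesIdentity) [Nontrivial M.carrier]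
    {A : M.carrier} (hA : M.IsAtom A) (hσ : σ.IsRSubst) (hτ : τ.IsRSubst)
    (hsatσ : SatisfiableIn {M} σ) (hsatτ : SatisfiableIn {M} τ) (hequiv : EquivIn {M} σ τ)
    {k K : ℕ} {y z : Vr} {P : List ℕ} (hz : z ∉ τ.dom) (hP : OccAt (τ.iterApp k (var y)) P z)
    (hK : (P.length + 1) * (σ.nb + 1) ≤ K) :
    ∃ ξ, ξ ∉ σ.dom ∧ τ.iterApp τ.nb (var ξ) = var z ∧ OccAt (σ.iterApp K (var y)) P ξ := by
  obtain ⟨B, hAB⟩ := exists_ne A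
  obtain ⟨ν, hνfree, hν⟩ := hsatτ M rfl fun _ => A
  obtain ⟨ν', hν'free, hν'⟩ := hsatτ M rfl (update (fun _ => A) z B)
  have heval (μ : Vr → M.carrier) (hμ : M.SatEqs μ (eqsOf τ)) :
      M.eval μ (τ.iterApp k (var y)) = M.eval μ (σ.iterApp K (var y)) := by
    rw [eval_iterApp ((hequiv M rfl μ).2 hμ), eval_iterApp hμ]
  have hνz : ν z = A := hνfree z hz
  have hν'z : ν' z = B := by rw [hν'free z hz, update_self]
  obtain ⟨q, r, ξ, rfl, hq, hξ, hr⟩ := hM.exists_occAt_ne_of_eval_eq hP (hνz ▸ hA)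
    (by rw [hνz, hν'z]; exact hAB.symm) (heval ν hν) (heval ν' hν')
  have hξσ : ξ ∉ σ.dom :=
    notMem_dom_of_occAt_iterApp hσ hq (le_trans (Nat.mul_le_mul_right _ (by simp)) hK)
  obtain ⟨η, hη⟩ := fvars_subset hA hσ hsatσ hequiv (mem_fvars_of_notMem_dom hξσ)
  have hητ := notMem_dom_of_iterApp_nb_eq_var hτ hη
  obtain rfl : η = z := by
    by_contra hηz
    apply hξ
    rw [apply_eq_of_iterApp_eq_var hν hη, apply_eq_of_iterApp_eq_var hν' hη, hνfree η hητ,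
      hν'free η hητ, update_of_ne hηz]
  obtain rfl : r = [] := hr (by rwa [apply_eq_of_iterApp_eq_var hν hη, hνz])
  exact ⟨ξ, hξσ, hη, by rwa [List.append_nil]⟩

theorem lvars_subset (hM : M.SatisfiesIdentity) [Nontrivial M.carrier] {A : M.carrier}
    (hA : M.IsAtom A) (hσ : σ.IsRSubst) (hτ : τ.IsRSubst) (hsatσ : SatisfiableIn {M} σ)
    (hsatτ : SatisfiableIn {M} τ) (hequiv : EquivIn {M} σ τ) : σ.lvars ⊆ τ.lvars := by
  intro y hy z hz hzτ
  obtain ⟨P, hP⟩ := exists_occAt_of_mem_vars hz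
  have hpos : 0 < (τ.iterApp (2 * τ.nb) (var y)).count z :=
    count_pos_iff.2 (occAt_iterApp_of_le hzτ hP (by omega)).mem_vars
  suffices ¬ 1 < (τ.iterApp (2 * τ.nb) (var y)).count z by omega
  intro h
  obtain ⟨P₁, P₂, hne, hP₁, hP₂⟩ := one_lt_count_iff.1 h
  obtain ⟨ξ₁, hξ₁σ, hξ₁, hO₁⟩ := exists_occAt_iterApp_of_occAt_iterApp hM hA hσ hτ hsatσ hsatτ
    hequiv hzτ hP₁ (K := (P₁.length + P₂.length + 1) * (σ.nb + 1)) (by gcongr; omega)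
  obtain ⟨ξ₂, hξ₂σ, hξ₂, hO₂⟩ := exists_occAt_iterApp_of_occAt_iterApp hM hA hσ hτ hsatσ hsatτ
    hequiv hzτ hP₂ (K := (P₁.length + P₂.length + 1) * (σ.nb + 1)) (by gcongr; omega)
  obtain rfl : ξ₁ = ξ₂ := eq_of_forall_satEqs hsatσ hξ₁σ hξ₂σ fun ν hν => by
    have hντ := (hequiv M rfl ν).1 hν
    rw [apply_eq_of_iterApp_eq_var hντ hξ₁, apply_eq_of_iterApp_eq_var hντ hξ₂]
  have h₂ := one_lt_count_iterApp_two_mul_nb hξ₁σ (one_lt_count_iff.2 ⟨P₁, P₂, hne, hO₁, hO₂⟩)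
  have h₁ := hy ξ₁ (mem_vars_iterApp_nb hξ₁σ hO₁.mem_vars) hξ₁σ
  omega

end Transfer

theorem alphaS_eq_of_equiv_general
    {Sig Vr : Type} {ar : Sig → ℕ}
    (_hSig : ∃ a b : Sig, a ≠ b ∧ ar a = 0)
    (VI : Set Vr)
    (T : Set (Interp Sig ar)) (_hT : IsSyntacticTheory T)
    (σ τ : Subst Sig ar Vr) (_hσ : σ.IsRSubst) (_hτ : τ.IsRSubst)
    (_hsatσ : SatisfiableIn T σ) (_hsatτ : SatisfiableIn T τ)
    (_hequiv : EquivIn T σ τ) :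
    alphaS VI σ = alphaS VI τ := by
  obtain ⟨a, b, hab, ha⟩ := _hSig
  obtain ⟨⟨M, hMT⟩, hT⟩ := _hT
  have hM := hT M hMT
  have e : Fin (ar a) → M.carrier := fun i => (i.cast ha).elim0
  have := hM.nontrivial hab e
  have hA := hM.isAtom_interp ha e
  have hsub : {M} ⊆ T := Set.singleton_subset_iff.2 hMT
  have hsatσ := _hsatσ.mono hsub
  have hsatτ := _hsatτ.mono hsub
  have hequiv := _hequiv.mono hsub
  have hfv := (fvars_subset hA _hσ hsatσ hequiv).antisymm (fvars_subset hA _hτ hsatτ hequiv.symm)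
  have hss := (ssets_subset hM hA _hσ _hτ hsatσ hsatτ hequiv VI).antisymm
    (ssets_subset hM hA _hτ _hσ hsatτ hsatσ hequiv.symm VI)
  have hlv := (lvars_subset hM hA _hσ _hτ hsatσ hsatτ hequiv).antisymm
    (lvars_subset hM hA _hτ _hσ hsatτ hsatσ hequiv.symm)
  rw [alphaS, alphaS, hfv, hss, hlv]

/-- Let `T` be a syntactic equality theory and `σ, τ ∈ RSubst`
both satisfiable in `T`, with `T ⊢ ∀(σ ↔ τ)`. Then `α_S(σ) = α_S(τ)`. -/
theorem alphaS_eq_of_equiv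
    {Sig Vr : Type} {ar : Sig → ℕ} [Denumerable Vr]
    (_hSig : ∃ a b : Sig, a ≠ b ∧ ar a = 0)
    (VI : Set Vr) (_hVI : VI.Finite)
    (T : Set (Interp Sig ar)) (_hT : IsSyntacticTheory T)
    (σ τ : Subst Sig ar Vr) (_hσ : σ.IsRSubst) (_hτ : τ.IsRSubst)
    (_hsatσ : SatisfiableIn T σ) (_hsatτ : SatisfiableIn T τ)
    (_hequiv : EquivIn T σ τ) :
    alphaS VI σ = alphaS VI τ :=
  alphaS_eq_of_equiv_general _hSig VI T _hT σ τ _hσ _hτ _hsatσ _hsatτ _hequiv
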